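/- Let u_SY(t,x) = 4√2 (cosh(3x) + 3e^{8it}cosh(x)) / (cosh(4x) + 4cosh(2x) + 3cos(8t)) be the Satsuma–Yajima breather. Then for every t ∈ ℝ its mass, energy and momentum equal M[u_SY] = ∫_ℝ |u_SY(t,x)|² dx = 16, E[u_SY] = ∫_ℝ (|∂_x u_SY(t,x)|² - (1/2)|u_SY(t,x)|⁴) dx = -112/3, and P[u_SY] = Im ∫_ℝ ∂_x u_SY(t,x) · conj(u_SY(t,x)) dx = 0. -/

import Mathlib

open MeasureTheory Real Complex Function

/-- Denominator of the Satsuma–Yajima breather. -/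
noncomputable def denSY (t x : ℝ) : ℝ :=
  Real.cosh (4 * x) + 4 * Real.cosh (2 * x) + 3 * Real.cos (8 * t)

/-- The Satsuma–Yajima breather
`u_SY(t,x) = 4√2 (cosh(3x) + 3 e^{8it} cosh(x)) / (cosh(4x) + 4cosh(2x) + 3cos(8t))`. -/
noncomputable def uSY (t x : ℝ) : ℂ :=
  ((4 * Real.sqrt 2 : ℝ) : ℂ)
    * ((Real.cosh (3 * x) : ℝ)
        + 3 * Complex.exp (8 * Complex.I * (t : ℂ)) * ((Real.cosh x : ℝ) : ℂ))
    / ((denSY t x : ℝ) : ℂ)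

/-!
Write `c = cos 8t` and `D = cosh 4x + 4 cosh 2x + 3c`. Then `u_SY = 4√2 (p + e^{8it} q)` with the
real, even functions `p = cosh 3x / D` and `q = 3 cosh x / D`, so `|u|²` and `|∂ₓu|²` are the
quadratic forms `a² + 2c ab + b²` in `(p, q)` and `(∂ₓp, ∂ₓq)`. The mass density equals
`2 ∂ₓ² log D`, and the energy density has the explicit antiderivative `N / D³` with `N` a
combination of the `sinh 2kx`. Both antiderivatives are rational functions of `e^{-x}` that are
regular at `0`; this gives their limits at `+∞` and the exponential decay of the densities, hence
their integrability. Evenness in `x` reduces both integrals to `(0, ∞)`, and makes `∂ₓu · ū` odd,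
so the momentum vanishes.
-/

open Filter Topology Set

theorem Real.exp_ofNat_mul (n : ℕ) [n.AtLeastTwo] (x : ℝ) :
    Real.exp (no_index (OfNat.ofNat n) * x) = Real.exp x ^ (OfNat.ofNat n : ℕ) := by
  rw [← Real.exp_nat_mul, Nat.cast_ofNat]

theorem Complex.norm_ofReal_add_exp_mul_ofReal_sq (θ a b : ℝ) :
    ‖(a : ℂ) + Complex.exp (θ * Complex.I) * b‖ ^ 2
      = a ^ 2 + 2 * Real.cos θ * a * b + b ^ 2 := by
  rw [Complex.sq_norm, Complex.exp_mul_I, ← Complex.ofReal_cos, ← Complex.ofReal_sin,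
    Complex.normSq_apply]
  simp only [Complex.add_re, Complex.add_im, Complex.mul_re, Complex.mul_im, Complex.ofReal_re,
    Complex.ofReal_im, Complex.I_re, Complex.I_im]
  linear_combination b ^ 2 * Real.sin_sq_add_cos_sq θ

theorem Function.Even.deriv {𝕜 F : Type*} [NontriviallyNormedField 𝕜] [NormedAddCommGroup F]
    [NormedSpace 𝕜 F] {f : 𝕜 → F} (hf : f.Even) : (_root_.deriv f).Odd := fun x => by
  rw [← neg_neg (_root_.deriv f (-x)), ← deriv_comp_neg, funext hf]

theorem Function.Odd.integral_eq_zero {E : Type*} [NormedAddCommGroup E] [NormedSpace ℝ E]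
    {f : ℝ → E} (hf : f.Odd) : ∫ x, f x = 0 := by
  have h : -∫ x, f x = ∫ x, f x := by
    simpa only [hf.eq, integral_neg] using integral_neg_eq_self f volume
  have h2 : (2 : ℝ) • ∫ x, f x = 0 := by
    rw [two_smul]; nth_rw 1 [← h]; exact neg_add_cancel _
  exact (smul_eq_zero.mp h2).resolve_left two_ne_zero

theorem Function.Even.integral_eq_two_mul_integral_Ioi {f : ℝ → ℝ} (hf : f.Even) :
    ∫ x, f x = 2 * ∫ x in Ioi 0, f x := by
  rw [← integral_comp_abs]
  congr 1 with x
  rcases le_total 0 x with hx | hx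
  · rw [abs_of_nonneg hx]
  · rw [abs_of_nonpos hx, hf.eq]

/-- Since `f x = -e^{-x} G'(e^{-x})` is `O(e^{-x})`, it is integrable, and `F → G 0` at `+∞`. -/
theorem integral_Ioi_of_hasDerivAt_of_eq_comp_exp_neg {f F G : ℝ → ℝ} {a : ℝ}
    (hG : ContDiff ℝ 1 G) (hF : ∀ x, F x = G (Real.exp (-x)))
    (hf : ∀ x ∈ Ici a, HasDerivAt F (f x) x) :
    ∫ x in Ioi a, f x = G 0 - F a := by
  set g : ℝ → ℝ := fun x => deriv G (Real.exp (-x)) * -Real.exp (-x)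
  have hg : ∀ x, HasDerivAt F (g x) x := fun x => by
    rw [funext hF]
    exact ((hG.differentiable one_ne_zero _).hasDerivAt.comp x (hasDerivAt_neg x).exp).congr_deriv
      (by ring)
  have hexp : Tendsto (fun x => Real.exp (-x)) atTop (𝓝 0) :=
    Real.tendsto_exp_neg_atTop_nhds_zero
  have hg_int : IntegrableOn g (Ioi a) := by
    refine integrable_of_isBigO_exp_neg one_pos ?_ ?_
    · exact ((hG.continuous_deriv le_rfl).comp (by fun_prop)).mul (by fun_prop) |>.continuousOn
    · have hbdd := ((hG.continuous_deriv le_rfl).tendsto 0).comp hexp |>.isBigO_one ℝ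
      have hO : g =O[atTop] fun x => 1 * Real.exp (-x) :=
        hbdd.mul (Asymptotics.isBigO_refl _ _).neg_left
      simpa only [neg_mul, one_mul] using hO
  have hfg : EqOn f g (Ioi a) := fun x hx => (hf x (mem_Ici_of_Ioi hx)).unique (hg x)
  refine integral_Ioi_of_hasDerivAt_of_tendsto' hf
    (hg_int.congr_fun hfg.symm measurableSet_Ioi) ?_
  rw [funext hF]
  exact (hG.continuous.tendsto 0).comp hexp

noncomputable section

namespace SatsumaYajima

variable {c : ℝ}

def den (c x : ℝ) : ℝ := Real.cosh (4 * x) + 4 * Real.cosh (2 * x) + 3 * c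

def den' (x : ℝ) : ℝ := 4 * Real.sinh (4 * x) + 8 * Real.sinh (2 * x)

def den'' (x : ℝ) : ℝ := 16 * Real.cosh (4 * x) + 16 * Real.cosh (2 * x)

theorem den_pos (hc : -1 ≤ c) (x : ℝ) : 0 < den c x := by
  unfold den
  nlinarith [Real.one_le_cosh (4 * x), Real.one_le_cosh (2 * x)]

theorem even_den (c : ℝ) : (den c).Even := fun x => by
  simp only [den, mul_neg, Real.cosh_neg]

theorem odd_den' : den'.Odd := fun x => by
  simp only [den', mul_neg, Real.sinh_neg]
  ring

theorem hasDerivAt_den (c x : ℝ) : HasDerivAt (den c) (den' x) x := by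
  have h := ((((hasDerivAt_id x).const_mul 4).cosh).add
    ((((hasDerivAt_id x).const_mul 2).cosh).const_mul 4)).add_const (3 * c)
  refine h.congr_deriv ?_
  simp only [den', id]
  ring

theorem hasDerivAt_den' (x : ℝ) : HasDerivAt den' (den'' x) x := by
  have h := ((((hasDerivAt_id x).const_mul 4).sinh).const_mul 4).add
    ((((hasDerivAt_id x).const_mul 2).sinh).const_mul 8)
  refine h.congr_deriv ?_
  simp only [den'', id]
  ring

def steadyPart (c x : ℝ) : ℝ := Real.cosh (3 * x) / den c x

def oscillatingPart (c x : ℝ) : ℝ := 3 * Real.cosh x / den c x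

def steadyPart' (c x : ℝ) : ℝ :=
  (3 * Real.sinh (3 * x) * den c x - Real.cosh (3 * x) * den' x) / den c x ^ 2

def oscillatingPart' (c x : ℝ) : ℝ :=
  3 * (Real.sinh x * den c x - Real.cosh x * den' x) / den c x ^ 2

theorem hasDerivAt_steadyPart (hc : -1 ≤ c) (x : ℝ) :
    HasDerivAt (steadyPart c) (steadyPart' c x) x := by
  have h := (((hasDerivAt_id x).const_mul 3).cosh).div (hasDerivAt_den c x) (den_pos hc x).ne'
  refine h.congr_deriv ?_
  simp only [steadyPart', id]
  ring

theorem hasDerivAt_oscillatingPart (hc : -1 ≤ c) (x : ℝ) :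
    HasDerivAt (oscillatingPart c) (oscillatingPart' c x) x := by
  have h := ((Real.hasDerivAt_cosh x).const_mul 3).div (hasDerivAt_den c x) (den_pos hc x).ne'
  refine h.congr_deriv ?_
  simp only [oscillatingPart']
  ring

theorem odd_steadyPart' (c : ℝ) : (steadyPart' c).Odd := fun x => by
  simp only [steadyPart', mul_neg, Real.cosh_neg, Real.sinh_neg, (even_den c).eq, odd_den'.eq]
  ring

theorem odd_oscillatingPart' (c : ℝ) : (oscillatingPart' c).Odd := fun x => by
  simp only [oscillatingPart', Real.cosh_neg, Real.sinh_neg, (even_den c).eq, odd_den'.eq]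
  ring

def massDensity (c x : ℝ) : ℝ :=
  32 * (steadyPart c x ^ 2 + 2 * c * steadyPart c x * oscillatingPart c x + oscillatingPart c x ^ 2)

def energyDensity (c x : ℝ) : ℝ :=
  32 * (steadyPart' c x ^ 2 + 2 * c * steadyPart' c x * oscillatingPart' c x
      + oscillatingPart' c x ^ 2)
    - massDensity c x ^ 2 / 2

theorem even_massDensity (c : ℝ) : (massDensity c).Even := fun x => by
  simp only [massDensity, steadyPart, oscillatingPart, mul_neg, Real.cosh_neg, (even_den c).eq]

theorem even_energyDensity (c : ℝ) : (energyDensity c).Even := fun x => by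
  simp only [energyDensity, (odd_steadyPart' c).eq, (odd_oscillatingPart' c).eq,
    (even_massDensity c).eq]
  ring

def massPotential (c x : ℝ) : ℝ := 2 * den' x / den c x

theorem den''_mul_den_sub_den'_sq (c x : ℝ) :
    den'' x * den c x - den' x ^ 2
      = 16 * (Real.cosh (3 * x) ^ 2 + 6 * c * Real.cosh (3 * x) * Real.cosh x
          + 9 * Real.cosh x ^ 2) := by
  simp only [den, den', den'', Real.cosh_eq, Real.sinh_eq, Real.exp_neg, Real.exp_ofNat_mul]
  field_simp
  ring

theorem hasDerivAt_massPotential (hc : -1 ≤ c) (x : ℝ) :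
    HasDerivAt (massPotential c) (massDensity c x) x := by
  have h := ((hasDerivAt_den' x).const_mul 2).div (hasDerivAt_den c x) (den_pos hc x).ne'
  refine h.congr_deriv ?_
  have key := den''_mul_den_sub_den'_sq c x
  have hd := (den_pos hc x).ne'
  simp only [massDensity, steadyPart, oscillatingPart]
  generalize Real.cosh (3 * x) = a, Real.cosh x = b at key ⊢
  field_simp
  linear_combination 2 * key

/-- Found by computer algebra. -/
def energyNum (c x : ℝ) : ℝ :=
  (-1368 + 624 * c - 432 * c ^ 2) * Real.sinh (2 * x)
    + (-666 - 960 * c + 216 * c ^ 2) * Real.sinh (4 * x)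
    + (-1324 / 3 - 432 * c) * Real.sinh (6 * x) + (-192 - 120 * c) * Real.sinh (8 * x)
    - 60 * Real.sinh (10 * x) - 14 / 3 * Real.sinh (12 * x)

def energyNum' (c x : ℝ) : ℝ :=
  (-2736 + 1248 * c - 864 * c ^ 2) * Real.cosh (2 * x)
    + (-2664 - 3840 * c + 864 * c ^ 2) * Real.cosh (4 * x)
    + (-2648 - 2592 * c) * Real.cosh (6 * x) + (-1536 - 960 * c) * Real.cosh (8 * x)
    - 600 * Real.cosh (10 * x) - 56 * Real.cosh (12 * x)

theorem hasDerivAt_energyNum (c x : ℝ) : HasDerivAt (energyNum c) (energyNum' c x) x := by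
  have hs : ∀ k : ℝ, HasDerivAt (fun y => Real.sinh (k * y)) (Real.cosh (k * x) * k) x :=
    fun k => ((hasDerivAt_id x).const_mul k).sinh.congr_deriv (by simp)
  have h := ((((((hs 2).const_mul (-1368 + 624 * c - 432 * c ^ 2)).add
    ((hs 4).const_mul (-666 - 960 * c + 216 * c ^ 2))).add
    ((hs 6).const_mul (-1324 / 3 - 432 * c))).add ((hs 8).const_mul (-192 - 120 * c))).sub
    ((hs 10).const_mul 60)).sub ((hs 12).const_mul (14 / 3))
  refine h.congr_deriv ?_
  simp only [energyNum']
  ring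

def energyPotential (c x : ℝ) : ℝ := energyNum c x / den c x ^ 3

theorem energyNum'_mul_den_sub_energyNum_mul_den' (c x : ℝ) :
    energyNum' c x * den c x - 3 * energyNum c x * den' x
      = 32 * ((3 * Real.sinh (3 * x) * den c x - Real.cosh (3 * x) * den' x) ^ 2
          + 2 * c * (3 * Real.sinh (3 * x) * den c x - Real.cosh (3 * x) * den' x)
            * (3 * (Real.sinh x * den c x - Real.cosh x * den' x))
          + (3 * (Real.sinh x * den c x - Real.cosh x * den' x)) ^ 2)
        - 512 * (Real.cosh (3 * x) ^ 2 + 6 * c * Real.cosh (3 * x) * Real.cosh x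
          + 9 * Real.cosh x ^ 2) ^ 2 := by
  simp only [energyNum, energyNum', den, den', Real.cosh_eq, Real.sinh_eq, Real.exp_neg,
    Real.exp_ofNat_mul]
  field_simp
  ring

theorem hasDerivAt_energyPotential (hc : -1 ≤ c) (x : ℝ) :
    HasDerivAt (energyPotential c) (energyDensity c x) x := by
  have h := (hasDerivAt_energyNum c x).div ((hasDerivAt_den c x).pow 3)
    (pow_ne_zero 3 (den_pos hc x).ne')
  refine h.congr_deriv ?_
  have key := energyNum'_mul_den_sub_energyNum_mul_den' c x
  have hd := (den_pos hc x).ne'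
  simp only [energyDensity, massDensity, steadyPart, oscillatingPart, steadyPart', oscillatingPart',
    Pi.pow_apply, Nat.cast_ofNat, Nat.add_one_sub_one]
  generalize Real.cosh (3 * x) = a, Real.sinh (3 * x) = a', Real.cosh x = b, Real.sinh x = b',
    den' x = d', energyNum c x = N, energyNum' c x = N' at key ⊢
  field_simp
  linear_combination 2 * key

/-- `2 z⁴ den c x` at `z = e^{-x}`. -/
def denPoly (c z : ℝ) : ℝ := 1 + 4 * z ^ 2 + 6 * c * z ^ 4 + 4 * z ^ 6 + z ^ 8

theorem denPoly_pos (hc : -1 ≤ c) (z : ℝ) : 0 < denPoly c z := by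
  unfold denPoly
  nlinarith [pow_nonneg (sq_nonneg (1 - z ^ 2)) 2, sq_nonneg z,
    mul_nonneg (sq_nonneg z) (sq_nonneg (z ^ 2 - 3 / 4)),
    mul_nonneg (neg_le_iff_add_nonneg.mp hc) (pow_nonneg (sq_nonneg z) 2)]

def massProfile (c z : ℝ) : ℝ := 8 * (1 + 2 * z ^ 2 - 2 * z ^ 6 - z ^ 8) / denPoly c z

def energyProfile (c z : ℝ) : ℝ :=
  4 * ((-1368 + 624 * c - 432 * c ^ 2) * (z ^ 10 - z ^ 14)
    + (-666 - 960 * c + 216 * c ^ 2) * (z ^ 8 - z ^ 16)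
    + (-1324 / 3 - 432 * c) * (z ^ 6 - z ^ 18) + (-192 - 120 * c) * (z ^ 4 - z ^ 20)
    - 60 * (z ^ 2 - z ^ 22) - 14 / 3 * (1 - z ^ 24))
    / denPoly c z ^ 3

theorem contDiff_massProfile (hc : -1 ≤ c) : ContDiff ℝ 1 (massProfile c) := by
  unfold massProfile denPoly
  exact ContDiff.div (by fun_prop) (by fun_prop) fun z => (denPoly_pos hc z).ne'

theorem contDiff_energyProfile (hc : -1 ≤ c) : ContDiff ℝ 1 (energyProfile c) := by
  unfold energyProfile denPoly
  exact ContDiff.div (by fun_prop) (by fun_prop) fun z => pow_ne_zero 3 (denPoly_pos hc z).ne'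

theorem massPotential_eq_massProfile (hc : -1 ≤ c) (x : ℝ) :
    massPotential c x = massProfile c (Real.exp (-x)) := by
  have h₁ := denPoly_pos hc (Real.exp (-x))
  have h₂ := den_pos hc x
  simp only [massPotential, massProfile, denPoly, den, den', Real.cosh_eq, Real.sinh_eq,
    Real.exp_neg, Real.exp_ofNat_mul] at h₁ h₂ ⊢
  field_simp
  ring

theorem energyPotential_eq_energyProfile (hc : -1 ≤ c) (x : ℝ) :
    energyPotential c x = energyProfile c (Real.exp (-x)) := by
  have h₁ := denPoly_pos hc (Real.exp (-x))
  have h₂ := den_pos hc x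
  simp only [energyPotential, energyNum, energyProfile, denPoly, den, Real.cosh_eq,
    Real.sinh_eq, Real.exp_neg, Real.exp_ofNat_mul] at h₁ h₂ ⊢
  field_simp
  ring

theorem integral_massDensity (hc : -1 ≤ c) : ∫ x, massDensity c x = 16 := by
  rw [(even_massDensity c).integral_eq_two_mul_integral_Ioi,
    integral_Ioi_of_hasDerivAt_of_eq_comp_exp_neg (contDiff_massProfile hc)
      (massPotential_eq_massProfile hc) fun x _ => hasDerivAt_massPotential hc x]
  norm_num [massProfile, denPoly, massPotential, den']

theorem integral_energyDensity (hc : -1 ≤ c) : ∫ x, energyDensity c x = -112 / 3 := by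
  rw [(even_energyDensity c).integral_eq_two_mul_integral_Ioi,
    integral_Ioi_of_hasDerivAt_of_eq_comp_exp_neg (contDiff_energyProfile hc)
      (energyPotential_eq_energyProfile hc) fun x _ => hasDerivAt_energyPotential hc x]
  norm_num [energyProfile, denPoly, energyPotential, energyNum]

theorem uSY_eq (t : ℝ) :
    uSY t = fun x => ((4 * √2 : ℝ) : ℂ) * (steadyPart (Real.cos (8 * t)) x
      + Complex.exp ((8 * t : ℝ) * Complex.I) * oscillatingPart (Real.cos (8 * t)) x) := by
  funext x
  have hd : (den (Real.cos (8 * t)) x : ℂ) ≠ 0 :=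
    Complex.ofReal_ne_zero.mpr (den_pos (Real.neg_one_le_cos _) x).ne'
  rw [uSY, show (8 : ℂ) * Complex.I * t = ((8 * t : ℝ) : ℂ) * Complex.I by push_cast; ring,
    show denSY t x = den (Real.cos (8 * t)) x from rfl, steadyPart, oscillatingPart]
  push_cast
  field_simp

theorem hasDerivAt_uSY (t x : ℝ) :
    HasDerivAt (uSY t) (((4 * √2 : ℝ) : ℂ) * (steadyPart' (Real.cos (8 * t)) x
      + Complex.exp ((8 * t : ℝ) * Complex.I) * oscillatingPart' (Real.cos (8 * t)) x)) x := by
  have hc := Real.neg_one_le_cos (8 * t)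
  rw [uSY_eq]
  exact ((hasDerivAt_steadyPart hc x).ofReal_comp.add
    ((hasDerivAt_oscillatingPart hc x).ofReal_comp.const_mul _)).const_mul _

theorem even_uSY (t : ℝ) : (uSY t).Even := fun x => by
  simp only [uSY, denSY, mul_neg, Real.cosh_neg]

theorem norm_four_sqrt_two_mul_sq (θ a b : ℝ) :
    ‖((4 * √2 : ℝ) : ℂ) * (a + Complex.exp (θ * Complex.I) * b)‖ ^ 2
      = 32 * (a ^ 2 + 2 * Real.cos θ * a * b + b ^ 2) := by
  rw [norm_mul, mul_pow, Complex.norm_ofReal_add_exp_mul_ofReal_sq, Complex.norm_real,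
    Real.norm_eq_abs, sq_abs, mul_pow, Real.sq_sqrt zero_le_two]
  norm_num

theorem norm_uSY_sq (t x : ℝ) : ‖uSY t x‖ ^ 2 = massDensity (Real.cos (8 * t)) x := by
  rw [uSY_eq, norm_four_sqrt_two_mul_sq, massDensity]

theorem norm_deriv_uSY_sq_sub_half_norm_uSY_pow_four (t x : ℝ) :
    ‖deriv (uSY t) x‖ ^ 2 - 1 / 2 * ‖uSY t x‖ ^ 4 = energyDensity (Real.cos (8 * t)) x := by
  rw [(hasDerivAt_uSY t x).deriv, norm_four_sqrt_two_mul_sq,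
    show ‖uSY t x‖ ^ 4 = (‖uSY t x‖ ^ 2) ^ 2 by ring, norm_uSY_sq, energyDensity]
  ring

end SatsumaYajima

end

/-- **Mass, energy and momentum of the Satsuma–Yajima breather.**
For every time `t`: `M[u_SY] = 16`, `E[u_SY] = -112/3` and `P[u_SY] = 0`. -/
theorem satsuma_yajima_mass_energy_momentum :
    ∀ t : ℝ,
      (∫ x : ℝ, ‖uSY t x‖ ^ 2) = 16 ∧
      (∫ x : ℝ, (‖deriv (fun y => uSY t y) x‖ ^ 2 - (1 / 2) * ‖uSY t x‖ ^ 4))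
        = -112 / 3 ∧
      (∫ x : ℝ, deriv (fun y => uSY t y) x * (starRingEnd ℂ) (uSY t x)).im = 0 := by
  intro t
  have hc := Real.neg_one_le_cos (8 * t)
  refine ⟨?_, ?_, ?_⟩
  · simp only [SatsumaYajima.norm_uSY_sq]
    exact SatsumaYajima.integral_massDensity hc
  · simp only [SatsumaYajima.norm_deriv_uSY_sq_sub_half_norm_uSY_pow_four]
    exact SatsumaYajima.integral_energyDensity hc
  · have hodd := (SatsumaYajima.even_uSY t).deriv.mul_even
      ((SatsumaYajima.even_uSY t).left_comp (starRingEnd ℂ))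
    exact (congrArg Complex.im hodd.integral_eq_zero).trans Complex.zero_im
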